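/- Let n ≥ 1, let 1 ≤ m < n, and let w, u be permutations of {1,2,…,n} such that w →^{r_m} u, witnessed by pairs (a_1,b_1),…,(a_s,b_s) with s = ℓ(u) − ℓ(w), a_i ≤ m < b_i, b_1,…,b_s pairwise distinct, u = wτ_{a_1b_1}⋯τ_{a_sb_s}, and ℓ(wτ_{a_1b_1}⋯τ_{a_ib_i}) = ℓ(w) + i for all i. If b satisfies m < b ≤ n and w(b) > u(b), then there is a unique index i with 1 ≤ i ≤ s and b = b_i, and for this i one has u(a_i) ≥ w(b). -/

import Mathlib

/-- The length (number of inversions) of a permutation of `Fin n`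
(representing `{1,…,n}` with `i : Fin n` standing for `i+1`). -/
def invLength {n : ℕ} (w : Equiv.Perm (Fin n)) : ℕ :=
  (Finset.univ.filter fun p : Fin n × Fin n => p.1 < p.2 ∧ w p.2 < w p.1).card

/-- `w τ_{a₁b₁} ⋯ τ_{aₛbₛ}` for the list of pairs `L = [(a₁,b₁),…,(aₛ,bₛ)]`. -/
def chainProd {n : ℕ} (w : Equiv.Perm (Fin n)) (L : List (Fin n × Fin n)) :
    Equiv.Perm (Fin n) :=
  w * (L.map fun p => Equiv.swap p.1 p.2).prod

/-- The list `L = [(a₁,b₁),…,(aₛ,bₛ)]` is a chain witnessing `w ≤ₘ u`: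
each `aᵢ ≤ m < bᵢ` (in 1-indexed terms, i.e. `(aᵢ : ℕ) < m ≤ (bᵢ : ℕ)` in 0-indexed `Fin n`),
`u = w τ_{a₁b₁} ⋯ τ_{aₛbₛ}`, and `ℓ(w τ_{a₁b₁} ⋯ τ_{aᵢbᵢ}) = ℓ(w) + i` for all `i ≤ s`. -/
def IsMChain {n : ℕ} (m : ℕ) (w u : Equiv.Perm (Fin n)) (L : List (Fin n × Fin n)) : Prop :=
  (∀ p ∈ L, (p.1 : ℕ) < m ∧ m ≤ (p.2 : ℕ)) ∧
  u = chainProd w L ∧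
  ∀ i, i ≤ L.length → invLength (chainProd w (L.take i)) = invLength w + i

/-- The `m`-Bruhat order `w ≤ₘ u`. -/
def mBruhat {n : ℕ} (m : ℕ) (w u : Equiv.Perm (Fin n)) : Prop :=
  ∃ L, IsMChain m w u L

/-- `w →^{r_m} u` : as `w ≤ₘ u`, with the `bᵢ` pairwise distinct. -/
def rmRel {n : ℕ} (m : ℕ) (w u : Equiv.Perm (Fin n)) : Prop :=
  ∃ L, IsMChain m w u L ∧ (L.map Prod.snd).Nodup

/-!
A step `v ↦ v * τ_{ab}` with `a < b` and `v a > v b` lowers the length, so in a chain whose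
steps each raise the length by one every step has `v a < v b`. As all `aₖ < m ≤ b`, the entry
at position `b` changes only at a step with `bᵢ = b`; such a step exists because `u b ≠ w b`,
and it is unique because the `bₖ` are distinct. It moves the value `w b` to position `aᵢ`,
which is never a second entry, so afterwards that position only receives larger values.
-/

section SaturatedChains

variable {n : ℕ}

theorem invLength_mul_swap_lt (w : Equiv.Perm (Fin n)) {a b : Fin n} (hab : a < b)
    (hw : w b < w a) : invLength (w * Equiv.swap a b) < invLength w := by
  set τ := Equiv.swap a b
  have hτ (x : Fin n) : τ x = if x = a then b else if x = b then a else x :=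
    Equiv.swap_apply_def a b x
  -- An inversion `(i, j)` of `w * τ` goes to the inversion `(τ i, τ j)` of `w` when `τ` keeps
  -- `i, j` in order, and to itself otherwise; the inversion `(a, b)` of `w` is never hit.
  let F (p : Fin n × Fin n) : Fin n × Fin n := if τ p.1 < τ p.2 then (τ p.1, τ p.2) else p
  calc invLength (w * τ)
      ≤ ((Finset.univ.filter fun p : Fin n × Fin n => p.1 < p.2 ∧ w p.2 < w p.1).erase
          (a, b)).card := by
        refine Finset.card_le_card_of_injOn F (fun p hp => ?_) (fun p hp q hq hpq => ?_)
        · simp only [Finset.coe_filter, Finset.coe_erase, Equiv.Perm.mul_apply, F] at hp ⊢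
          grind
        · simp only [Equiv.Perm.mul_apply, F] at hp hq hpq
          grind
    _ < invLength w := Finset.card_erase_lt_of_mem (by simp [hab, hw])

theorem chainProd_nil (w : Equiv.Perm (Fin n)) : chainProd w [] = w := by
  simp [chainProd]

theorem chainProd_cons (w : Equiv.Perm (Fin n)) (p : Fin n × Fin n) (L : List (Fin n × Fin n)) :
    chainProd w (p :: L) = chainProd (w * Equiv.swap p.1 p.2) L := by
  simp [chainProd, mul_assoc]

theorem chainProd_append (w : Equiv.Perm (Fin n)) (L₁ L₂ : List (Fin n × Fin n)) :
    chainProd w (L₁ ++ L₂) = chainProd (chainProd w L₁) L₂ := by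
  simp [chainProd, mul_assoc]

theorem chainProd_apply_of_forall_ne (w : Equiv.Perm (Fin n)) {L : List (Fin n × Fin n)}
    {x : Fin n} (hL : ∀ p ∈ L, p.1 ≠ x ∧ p.2 ≠ x) : chainProd w L x = w x := by
  induction L generalizing w with
  | nil => rw [chainProd_nil]
  | cons p L ih =>
    obtain ⟨h₁, h₂⟩ := hL p List.mem_cons_self
    rw [chainProd_cons, ih _ fun q hq => hL q (List.mem_cons_of_mem p hq), Equiv.Perm.mul_apply,
      Equiv.swap_apply_of_ne_of_ne h₁.symm h₂.symm]

def IsSaturatedChain (w : Equiv.Perm (Fin n)) (L : List (Fin n × Fin n)) : Prop :=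
  ∀ i ≤ L.length, invLength (chainProd w (L.take i)) = invLength w + i

theorem IsSaturatedChain.append_right {w : Equiv.Perm (Fin n)} {L₁ L₂ : List (Fin n × Fin n)}
    (h : IsSaturatedChain w (L₁ ++ L₂)) : IsSaturatedChain (chainProd w L₁) L₂ := by
  intro i hi
  have hL₁ := h L₁.length (by simp)
  have hL₁i := h (L₁.length + i) (by simpa using hi)
  rw [List.take_left] at hL₁
  rw [List.take_length_add_append, chainProd_append] at hL₁i
  omega

theorem IsSaturatedChain.apply_lt_apply_head {w : Equiv.Perm (Fin n)} {p : Fin n × Fin n}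
    {L : List (Fin n × Fin n)} (h : IsSaturatedChain w (p :: L)) (hp : p.1 < p.2) :
    w p.1 < w p.2 := by
  have h₁ := h 1 (by simp)
  simp only [List.take_succ_cons, List.take_zero, chainProd_cons, chainProd_nil] at h₁
  refine lt_of_le_of_ne (not_lt.1 fun hw => ?_) (w.injective.ne hp.ne)
  have := invLength_mul_swap_lt w hp hw
  omega

theorem IsSaturatedChain.apply_le_chainProd_apply {w : Equiv.Perm (Fin n)}
    {L : List (Fin n × Fin n)} (h : IsSaturatedChain w L) {x : Fin n}
    (hL : ∀ p ∈ L, p.1 < p.2 ∧ p.2 ≠ x) : w x ≤ chainProd w L x := by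
  induction L generalizing w with
  | nil => rw [chainProd_nil]
  | cons p L ih =>
    obtain ⟨hp, hpx⟩ := hL p List.mem_cons_self
    have htail : IsSaturatedChain (w * Equiv.swap p.1 p.2) L := by
      simpa [chainProd_cons, chainProd_nil] using h.append_right (L₁ := [p])
    calc w x ≤ (w * Equiv.swap p.1 p.2) x := by
          rw [Equiv.Perm.mul_apply]
          by_cases hx : x = p.1
          · rw [hx, Equiv.swap_apply_left]
            exact (h.apply_lt_apply_head hp).le
          · rw [Equiv.swap_apply_of_ne_of_ne hx hpx.symm]
      _ ≤ chainProd w (p :: L) x := by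
          rw [chainProd_cons]
          exact ih htail fun q hq => hL q (List.mem_cons_of_mem p hq)

theorem IsSaturatedChain.le_chainProd_apply_fst {w : Equiv.Perm (Fin n)}
    {s t : List (Fin n × Fin n)} {a b : Fin n} (h : IsSaturatedChain w (s ++ (a, b) :: t))
    (hs : ∀ p ∈ s, p.1 ≠ b ∧ p.2 ≠ b) (ht : ∀ p ∈ t, p.1 < p.2 ∧ p.2 ≠ a) :
    w b ≤ chainProd w (s ++ (a, b) :: t) a := by
  rw [List.append_cons] at h ⊢
  have hstart : chainProd w (s ++ [(a, b)]) a = w b := by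
    rw [chainProd_append, chainProd_cons, chainProd_nil, Equiv.Perm.mul_apply,
      Equiv.swap_apply_left, chainProd_apply_of_forall_ne w hs]
  rw [← hstart, chainProd_append w (s ++ [(a, b)]) t]
  exact h.append_right.apply_le_chainProd_apply ht

end SaturatedChains

theorem stmt6_general (n m : ℕ)
    (w u : Equiv.Perm (Fin n)) (L : List (Fin n × Fin n))
    (hL : IsMChain m w u L) (hb : (L.map Prod.snd).Nodup) :
    ∀ b : Fin n, m ≤ (b : ℕ) → u b < w b →
      ∃ i : Fin L.length, (L.get i).2 = b ∧
        (∀ j : Fin L.length, (L.get j).2 = b → j = i) ∧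
        w b ≤ u (L.get i).1 := by
  intro b hmb hub
  obtain ⟨hpairs, rfl, hsat⟩ := hL
  have hfst_lt : ∀ p ∈ L, ∀ x : Fin n, m ≤ x → p.1 < x := fun p hp x hx =>
    Fin.lt_def.2 ((hpairs p hp).1.trans_le hx)
  obtain ⟨i, hi⟩ : ∃ i : Fin L.length, (L.get i).2 = b := by
    by_contra! hnone
    refine hub.ne (chainProd_apply_of_forall_ne w fun p hp => ⟨(hfst_lt p hp b hmb).ne, ?_⟩)
    obtain ⟨j, rfl⟩ := List.get_of_mem hp
    exact hnone j
  have hsplit : L = L.take i ++ ((L.get i).1, b) :: L.drop (i + 1) := by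
    rw [← hi, List.get_eq_getElem, ← List.drop_eq_getElem_cons, List.take_append_drop]
  have huniq (j : Fin L.length) (hj : (L.get j).2 = b) : j = i :=
    Fin.ext <| (hb.getElem_inj_iff (hi := by simp) (hj := by simp)).1
      (by simpa using hj.trans hi.symm)
  refine ⟨i, hi, huniq, ?_⟩
  have hs : ∀ p ∈ L.take i, p.1 ≠ b ∧ p.2 ≠ b := by
    have hb' := hb
    rw [hsplit, List.map_append, List.map_cons, List.nodup_append] at hb'
    exact fun p hp => ⟨(hfst_lt p (List.mem_of_mem_take hp) b hmb).ne,
      hb'.2.2 _ (List.mem_map_of_mem hp) b List.mem_cons_self⟩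
  have ht : ∀ p ∈ L.drop (i + 1), p.1 < p.2 ∧ p.2 ≠ (L.get i).1 := fun p hp => by
    have hp₂ := (hpairs p (List.mem_of_mem_drop hp)).2
    exact ⟨hfst_lt p (List.mem_of_mem_drop hp) p.2 hp₂,
      (hfst_lt _ (List.get_mem L i) p.2 hp₂).ne'⟩
  have key := (hsplit ▸ hsat : IsSaturatedChain w _).le_chainProd_apply_fst hs ht
  rwa [← hsplit] at key

/-- given a chain with distinct `bᵢ` witnessing `w →^{r_m} u`,
if `m < b ≤ n` and `w(b) > u(b)`, then there is a unique index `i` with `b = bᵢ`,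
and for this `i` one has `u(aᵢ) ≥ w(b)`. -/
theorem stmt6 (n m : ℕ) (hn : 1 ≤ n) (hm : 1 ≤ m) (hmn : m < n)
    (w u : Equiv.Perm (Fin n)) (L : List (Fin n × Fin n))
    (hL : IsMChain m w u L) (hb : (L.map Prod.snd).Nodup) :
    ∀ b : Fin n, m ≤ (b : ℕ) → u b < w b →
      ∃ i : Fin L.length, (L.get i).2 = b ∧
        (∀ j : Fin L.length, (L.get j).2 = b → j = i) ∧
        w b ≤ u (L.get i).1 :=
  stmt6_general n m w u L hL hb
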